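/- Let $E/F$ be a degree-$n$ extension of non-archimedean local fields with ramification index $e$ and residue degree $f$, and set $\mathfrak{d}(E/F) = |\pi_F|_F^{f(e-1)}$. Let $\mathrm{res}: \mathcal{N}^r(E) \to \mathcal{N}^{nr}(F)$ be the restriction-of-scalars map sending a norm $\nu_E$ on $E^r$ to the norm on $F^{nr}$ defined, via the orthogonal basis $\{\xi^i\pi_E^j\}$ of $O_E$ over $O_F$, by $\mathrm{res}(\nu_E)\big((a_{ij\ell})\big) = \nu_E\big(\sum_{i,j}a_{ij1}\xi^i\pi_E^j, \dots, \sum_{i,j}a_{ijr}\xi^i\pi_E^j\big)^{1/n}$. Then $D(\mathrm{res}(\nu_E)) = \mathfrak{d}(E/F)^{r/2} \cdot D(\nu_E)$ for every norm $\nu_E$ on $E^r$. -/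

import Mathlib

/-- An abstract (non-archimedean, multiplicative) absolute value on a field `F`. -/
structure NAAbs (F : Type*) [Field F] where
  abs : F → ℝ
  nonneg : ∀ a, 0 ≤ abs a
  eq_zero : ∀ a, abs a = 0 ↔ a = 0
  map_mul : ∀ a b, abs (a * b) = abs a * abs b
  ultra : ∀ a b, abs (a + b) ≤ max (abs a) (abs b)

/-- `F` together with `A` is a non-archimedean *local* field with uniformizer `π`:
the value group is discrete with generator `|π| < 1`, the residue field is finite,
and `F` is complete. -/
def NAAbs.IsLocal {F : Type*} [Field F] (A : NAAbs F) (π : F) : Prop :=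
  π ≠ 0 ∧ A.abs π < 1 ∧ (∀ a : F, A.abs a < 1 → A.abs a ≤ A.abs π) ∧
  (∃ S : Finset F, ∀ a : F, A.abs a ≤ 1 → ∃ s ∈ S, A.abs (a - s) < 1) ∧
  (∀ f : ℕ → F, (∀ ε : ℝ, 0 < ε → ∃ N, ∀ m ≥ N, ∀ n ≥ N, A.abs (f m - f n) < ε) →
    ∃ x : F, ∀ ε : ℝ, 0 < ε → ∃ N, ∀ n ≥ N, A.abs (f n - x) < ε)

/-- A non-archimedean norm on an `F`-vector space `V`, relative to the absolute value `A`. -/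
structure NANorm {F : Type*} [Field F] (A : NAAbs F)
    (V : Type*) [AddCommGroup V] [Module F V] where
  nu : V → ℝ
  nonneg : ∀ v, 0 ≤ nu v
  eq_zero : ∀ v, nu v = 0 ↔ v = 0
  smul_eq : ∀ (a : F) (v : V), nu (a • v) = A.abs a * nu v
  ultra : ∀ u v, nu (u + v) ≤ max (nu u) (nu v)

/-- `b` is an `O_F`-basis of the `O_F`-lattice `L ⊆ V`. -/
def IsLatticeBasis {F : Type*} [Field F] (A : NAAbs F)
    {V : Type*} [AddCommGroup V] [Module F V]
    {ι : Type*} [Fintype ι] (b : ι → V) (L : Set V) : Prop :=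
  LinearIndependent F b ∧
  ∀ v : V, v ∈ L ↔ ∃ c : ι → F, (∀ i, A.abs (c i) ≤ 1) ∧ v = ∑ i, c i • b i

/-- `b` is orthogonal with respect to the norm(-like function) `νn`. -/
def IsOrthogonalFor {F : Type*} [Field F] (A : NAAbs F)
    {V : Type*} [AddCommGroup V] [Module F V]
    {ι : Type*} [Fintype ι] (νn : V → ℝ) (b : ι → V) : Prop :=
  ∀ c : ι → F, νn (∑ i, c i • b i) = ⨆ i, νn (c i • b i)


/-! Two orthogonal lattice bases of the same lattice have the same discriminant: each is an
`O_F`-integral combination of the other, so the transition matrix `M` has `|det M| = 1`, and the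
ultrametric expansion of `det M` yields a permutation `σ` with `∏ |M (σ i) i| ≥ 1`, which by
orthogonality bounds one product of norms by the other. It therefore suffices to exhibit a single
orthogonal basis of `O_F^{nr}` for `res(ν_E)`; transported to `E^r`, the products
`ξ^i π_E^j • u_ℓ` form one. The family `ξ^i π_E^j` is an orthogonal basis of `O_E` over `O_F`
since the nonzero values of `|∑_i c_i ξ^i|` lie in `q^ℤ` while `|π_E^j| = q^{-j/e}` for
`0 ≤ j < e`, so the terms of different `j` have distinct absolute values. The discriminant of
this basis is `∏_{i,j,ℓ} q^{-j/e} ν_E(u_ℓ)^{1/n} = q^{-rf(e-1)/2} ∏_ℓ ν_E(u_ℓ)`. -/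

open Finset

lemma Finite.ciSup_comm {α β γ : Type*} [Finite α] [Finite β] [ConditionallyCompleteLattice γ]
    (g : α → β → γ) : ⨆ a, ⨆ b, g a b = ⨆ b, ⨆ a, g a b :=
  calc ⨆ a, ⨆ b, g a b = ⨆ p : α × β, g p.1 p.2 := (Finite.ciSup_prod fun p => g p.1 p.2).symm
    _ = ⨆ p : β × α, g p.2 p.1 := ((Equiv.prodComm β α).iSup_comp (g := fun p => g p.1 p.2)).symm
    _ = ⨆ b, ⨆ a, g a b := Finite.ciSup_prod fun p => g p.2 p.1

namespace NAAbs

variable {F : Type*} [Field F] (A : NAAbs F)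

def toAbsoluteValue : AbsoluteValue F ℝ where
  toFun := A.abs
  map_mul' := A.map_mul
  nonneg' := A.nonneg
  eq_zero' := A.eq_zero
  add_le' a b := (A.ultra a b).trans (max_le_add_of_nonneg (A.nonneg a) (A.nonneg b))

lemma isNonarchimedean : IsNonarchimedean A.abs := A.ultra

@[simp] lemma abs_zero : A.abs 0 = 0 := A.toAbsoluteValue.map_zero

@[simp] lemma abs_one : A.abs 1 = 1 := A.toAbsoluteValue.map_one

@[simp] lemma abs_neg (a : F) : A.abs (-a) = A.abs a := A.toAbsoluteValue.map_neg a

lemma abs_pow (a : F) (k : ℕ) : A.abs (a ^ k) = A.abs a ^ k := A.toAbsoluteValue.map_pow a k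

lemma abs_inv (a : F) : A.abs a⁻¹ = (A.abs a)⁻¹ := map_inv₀ A.toAbsoluteValue a

lemma abs_prod {ι : Type*} (s : Finset ι) (g : ι → F) :
    A.abs (∏ i ∈ s, g i) = ∏ i ∈ s, A.abs (g i) :=
  map_prod A.toAbsoluteValue g s

lemma abs_units_int_smul (s : ℤˣ) (a : F) : A.abs (s • a) = A.abs a := by
  rcases Int.units_eq_one_or s with rfl | rfl <;> simp [Units.smul_def]

lemma abs_sum_eq_iSup {ι : Type*} [Fintype ι] (g : ι → F)
    (hg : ∀ i j, A.abs (g i) = A.abs (g j) → A.abs (g i) ≠ 0 → i = j) :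
    A.abs (∑ i, g i) = ⨆ i, A.abs (g i) := by
  rcases isEmpty_or_nonempty ι with _ | _
  · simp [Real.iSup_of_isEmpty]
  obtain ⟨k, hk⟩ := exists_eq_ciSup_of_finite (f := fun i => A.abs (g i))
  have hle : ∀ i, A.abs (g i) ≤ A.abs (g k) :=
    fun i => (Finite.le_ciSup (fun i => A.abs (g i)) i).trans_eq hk.symm
  rw [← hk]
  rcases eq_or_ne (A.abs (g k)) 0 with h0 | h0
  · have hg0 : ∀ i, g i = 0 := fun i => (A.eq_zero _).mp (le_antisymm (h0 ▸ hle i) (A.nonneg _))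
    simp [hg0]
  · exact A.isNonarchimedean.apply_sum_eq_of_lt (fun a => (A.abs_neg a).symm) (mem_univ k)
      fun i _ hik => (hle i).lt_of_ne fun h => hik (hg i k h (h ▸ h0))

variable {ι : Type*} [Fintype ι] [DecidableEq ι]

lemma exists_perm_abs_det_le (P : Matrix ι ι F) :
    ∃ σ : Equiv.Perm ι, A.abs P.det ≤ ∏ i, A.abs (P (σ i) i) := by
  obtain ⟨σ, -, hσ⟩ := A.isNonarchimedean.finset_image_add_of_nonempty
    (fun σ : Equiv.Perm ι => Equiv.Perm.sign σ • ∏ i, P (σ i) i) univ_nonempty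
  rw [A.abs_units_int_smul] at hσ
  exact ⟨σ, by rwa [Matrix.det_apply, ← A.abs_prod]⟩

lemma abs_det_le_one {P : Matrix ι ι F} (hP : ∀ i j, A.abs (P i j) ≤ 1) : A.abs P.det ≤ 1 := by
  obtain ⟨σ, hσ⟩ := A.exists_perm_abs_det_le P
  exact hσ.trans (prod_le_one (fun i _ => A.nonneg _) fun i _ => hP _ _)

end NAAbs

section Lattice

variable {F : Type*} [Field F] {A : NAAbs F} {V : Type*} [AddCommGroup V] [Module F V]
  {ι : Type*} [Fintype ι] {b : ι → V} {L : Set V}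

lemma IsLatticeBasis.sum_smul_mem_iff (hb : IsLatticeBasis A b L) (c : ι → F) :
    ∑ i, c i • b i ∈ L ↔ ∀ i, A.abs (c i) ≤ 1 := by
  refine (hb.2 _).trans ⟨fun ⟨d, hd, h⟩ i => ?_, fun hc => ⟨c, hc, rfl⟩⟩
  rw [Fintype.linearIndependent_iffₛ.mp hb.1 c d h i]
  exact hd i

lemma IsLatticeBasis.mem [DecidableEq ι] (hb : IsLatticeBasis A b L) (i : ι) : b i ∈ L := by
  simpa using (hb.sum_smul_mem_iff (Pi.single i 1)).mpr fun j => by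
    by_cases h : j = i <;> simp [h]

lemma IsLatticeBasis.exists_integral_matrix (hb : IsLatticeBasis A b L) {κ : Type*}
    {b' : κ → V} (hb' : ∀ k, b' k ∈ L) :
    ∃ M : Matrix κ ι F, (∀ k i, A.abs (M k i) ≤ 1) ∧ ∀ k, b' k = ∑ i, M k i • b i := by
  choose M hM hMb using fun k => (hb.2 (b' k)).mp (hb' k)
  exact ⟨M, hM, hMb⟩

lemma IsLatticeBasis.comp_equiv {κ : Type*} [Fintype κ] (hb : IsLatticeBasis A b L)
    (σ : κ ≃ ι) : IsLatticeBasis A (b ∘ σ) L := by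
  refine ⟨hb.1.comp σ σ.injective, fun v => (hb.2 v).trans ?_⟩
  constructor
  · rintro ⟨c, hc, rfl⟩
    exact ⟨c ∘ σ, fun k => hc _, (σ.sum_comp fun i => c i • b i).symm⟩
  · rintro ⟨c, hc, rfl⟩
    exact ⟨c ∘ σ.symm, fun i => hc _, by simp [← σ.sum_comp fun i => c (σ.symm i) • b i]⟩

lemma IsLatticeBasis.map {W : Type*} [AddCommGroup W] [Module F W] {w : ι → W} {L : Set W}
    (hw : IsLatticeBasis A w L) (Φ : W →ₗ[F] V) (hΦ : Function.Injective Φ) :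
    IsLatticeBasis A (Φ ∘ w) (Φ '' L) := by
  refine ⟨hw.1.map' Φ (LinearMap.ker_eq_bot.mpr hΦ), fun v => ⟨?_, ?_⟩⟩
  · rintro ⟨x, hx, rfl⟩
    obtain ⟨c, hc, rfl⟩ := (hw.2 x).mp hx
    exact ⟨c, hc, by simp [map_sum]⟩
  · rintro ⟨c, hc, rfl⟩
    exact ⟨∑ i, c i • w i, (hw.2 _).mpr ⟨c, hc, rfl⟩, by simp [map_sum]⟩

lemma mul_eq_one_of_transition [DecidableEq ι] {b' : ι → V} (hb' : LinearIndependent F b')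
    {M N : Matrix ι ι F} (hM : ∀ i, b' i = ∑ j, M i j • b j)
    (hN : ∀ i, b i = ∑ j, N i j • b' j) : M * N = 1 := by
  ext i k
  refine Fintype.linearIndependent_iffₛ.mp hb' _ (fun k => (1 : Matrix ι ι F) i k) ?_ k
  calc ∑ k, (M * N) i k • b' k = ∑ j, M i j • b j := by
        simp_rw [hN, Matrix.mul_apply, Finset.smul_sum, Finset.sum_smul, smul_smul]
        exact Finset.sum_comm
    _ = ∑ k, (1 : Matrix ι ι F) i k • b' k := by simp [Matrix.one_apply, ← hM]

variable {ν : V → ℝ}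

lemma IsOrthogonalFor.le (hob : IsOrthogonalFor A ν b) (c : ι → F) (i : ι) :
    ν (c i • b i) ≤ ν (∑ j, c j • b j) :=
  hob c ▸ Finite.le_ciSup (fun j => ν (c j • b j)) i

lemma IsOrthogonalFor.comp_equiv {κ : Type*} [Fintype κ] (hob : IsOrthogonalFor A ν b)
    (σ : κ ≃ ι) : IsOrthogonalFor A ν (b ∘ σ) := by
  intro c
  have h := hob (c ∘ σ.symm)
  rw [← σ.iSup_comp] at h
  simpa [← σ.symm.sum_comp fun k => c k • b (σ k)] using h

lemma IsOrthogonalFor.map {W : Type*} [AddCommGroup W] [Module F W] {w : ι → W}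
    (Φ : W →ₗ[F] V) (hob : IsOrthogonalFor A (ν ∘ Φ) w) : IsOrthogonalFor A ν (Φ ∘ w) := by
  intro c
  simpa [map_sum] using hob c

lemma IsOrthogonalFor.rpow [Nonempty ι] (hob : IsOrthogonalFor A ν b) (hν : ∀ v, 0 ≤ ν v)
    {t : ℝ} (ht : 0 ≤ t) : IsOrthogonalFor A (fun v => ν v ^ t) b := by
  intro c
  show ν _ ^ t = ⨆ i, ν (c i • b i) ^ t
  rw [hob c]
  exact Finite.map_iSup_of_monotoneOn (Real.monotoneOn_rpow_Ici_of_exponent_nonneg ht)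
    fun i => hν _

lemma IsOrthogonalFor.linearIndependent (hob : IsOrthogonalFor A ν b) (hν : ∀ v, 0 ≤ ν v)
    (hν0 : ν 0 = 0) (hsmul : ∀ (a : F) v, ν (a • v) = A.abs a * ν v) (hb : ∀ i, ν (b i) ≠ 0) :
    LinearIndependent F b := by
  refine Fintype.linearIndependent_iff.mpr fun c hc i => ?_
  have h := hob.le c i
  rw [hc, hν0, hsmul] at h
  have h0 := le_antisymm h (mul_nonneg (A.nonneg (c i)) (hν (b i)))
  exact (A.eq_zero _).mp ((mul_eq_zero.mp h0).resolve_right (hb i))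

lemma IsOrthogonalFor.abs_det_mul_prod_le [DecidableEq ι] (hob : IsOrthogonalFor A ν b)
    (hν : ∀ v, 0 ≤ ν v) (hsmul : ∀ (a : F) v, ν (a • v) = A.abs a * ν v)
    (P : Matrix ι ι F) {d : ι → V} (hd : ∀ i, d i = ∑ j, P i j • b j) :
    A.abs P.det * ∏ i, ν (b i) ≤ ∏ i, ν (d i) := by
  obtain ⟨σ, hσ⟩ := A.exists_perm_abs_det_le P
  calc A.abs P.det * ∏ i, ν (b i) ≤ (∏ i, A.abs (P (σ i) i)) * ∏ i, ν (b i) := by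
        gcongr
        exact prod_nonneg fun i _ => hν _
    _ = ∏ i, ν (P (σ i) i • b i) := by simp [hsmul, prod_mul_distrib]
    _ ≤ ∏ i, ν (d (σ i)) :=
        prod_le_prod (fun i _ => hν _) fun i _ => hd (σ i) ▸ hob.le (P (σ i)) i
    _ = ∏ i, ν (d i) := Equiv.prod_comp σ fun i => ν (d i)

theorem IsLatticeBasis.prod_eq_of_isOrthogonalFor {b' : ι → V} (hb : IsLatticeBasis A b L)
    (hb' : IsLatticeBasis A b' L) (hob : IsOrthogonalFor A ν b) (hob' : IsOrthogonalFor A ν b')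
    (hν : ∀ v, 0 ≤ ν v) (hsmul : ∀ (a : F) v, ν (a • v) = A.abs a * ν v) :
    ∏ i, ν (b i) = ∏ i, ν (b' i) := by
  classical
  obtain ⟨M, hM1, hM⟩ := hb.exists_integral_matrix hb'.mem
  obtain ⟨N, hN1, hN⟩ := hb'.exists_integral_matrix hb.mem
  have hMN : A.abs M.det * A.abs N.det = 1 := by
    rw [← A.map_mul, ← Matrix.det_mul, mul_eq_one_of_transition hb'.1 hM hN, Matrix.det_one,
      A.abs_one]
  have hMle := A.abs_det_le_one hM1
  have hNle := A.abs_det_le_one hN1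
  have hM' : A.abs M.det = 1 := by nlinarith [A.nonneg M.det, A.nonneg N.det]
  have hN' : A.abs N.det = 1 := by nlinarith [A.nonneg M.det, A.nonneg N.det]
  apply le_antisymm
  · simpa [hM'] using hob.abs_det_mul_prod_le hν hsmul M hM
  · simpa [hN'] using hob'.abs_det_mul_prod_le hν hsmul N hN

lemma Module.Basis.isLatticeBasis_of_isOrthogonalFor [Nonempty ι] (B : Module.Basis ι F V)
    (hob : IsOrthogonalFor A ν B) (hunit : ∀ i (a : F), ν (a • B i) ≤ 1 ↔ A.abs a ≤ 1) :
    IsLatticeBasis A B {v | ν v ≤ 1} := by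
  have key : ∀ c : ι → F, ν (∑ i, c i • B i) ≤ 1 ↔ ∀ i, A.abs (c i) ≤ 1 := fun c => by
    simp_rw [hob c, ciSup_le_iff (Finite.bddAbove_range _), hunit]
  refine ⟨B.linearIndependent, fun v => ⟨fun hv => ⟨B.repr v, ?_, (B.sum_repr v).symm⟩, ?_⟩⟩
  · rw [← key, B.sum_repr]
    exact hv
  · rintro ⟨c, hc, rfl⟩
    exact (key c).mpr hc

end Lattice

lemma NANorm.rpow_inv_smul {E : Type*} [Field E] {AE : NAAbs E} {V : Type*} [AddCommGroup V]
    [Module E V] (ν : NANorm AE V) {n : ℕ} (hn : n ≠ 0) {w : E → ℝ} (hw : ∀ x, 0 ≤ w x)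
    (hAE : ∀ x, AE.abs x = w x ^ n) (x : E) (y : V) :
    ν.nu (x • y) ^ (n : ℝ)⁻¹ = w x * ν.nu y ^ (n : ℝ)⁻¹ := by
  rw [ν.smul_eq, hAE, Real.mul_rpow (pow_nonneg (hw x) n) (ν.nonneg y),
    Real.pow_rpow_inv_natCast (hw x) hn]

section Tower

variable {F E : Type*} [Field F] [Field E] [Algebra F E] {A : NAAbs F}
  {V : Type*} [AddCommGroup V] [Module F V] [Module E V] [IsScalarTower F E V]
  {κ ι : Type*} [Fintype κ] [Fintype ι] {B : κ → E} {u : ι → V}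

lemma sum_smul_smul_eq_sum_sum_smul (c : κ × ι → F) :
    ∑ p, c p • (B p.1 • u p.2) = ∑ ℓ, (∑ k, c (k, ℓ) • B k) • u ℓ := by
  simp_rw [Finset.sum_smul, smul_assoc, Fintype.sum_prod_type]
  exact Finset.sum_comm

lemma IsLatticeBasis.smul_tower {AE : NAAbs E} {L : Set V}
    (hB : IsLatticeBasis A B {x | AE.abs x ≤ 1}) (hu : IsLatticeBasis AE u L) :
    IsLatticeBasis A (fun p : κ × ι => B p.1 • u p.2) L := by
  refine ⟨linearIndependent_smul hB.1 hu.1, fun v => (hu.2 v).trans ⟨?_, ?_⟩⟩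
  · rintro ⟨c, hc, rfl⟩
    choose d hd hcd using fun ℓ => (hB.2 (c ℓ)).mp (hc ℓ)
    refine ⟨fun p => d p.2 p.1, fun p => hd _ _, ?_⟩
    rw [sum_smul_smul_eq_sum_sum_smul]
    simp_rw [← hcd]
  · rintro ⟨d, hd, rfl⟩
    exact ⟨fun ℓ => ∑ k, d (k, ℓ) • B k, fun ℓ => (hB.2 _).mpr ⟨_, fun k => hd _, rfl⟩,
      sum_smul_smul_eq_sum_sum_smul d⟩

lemma IsOrthogonalFor.smul_tower {v : NAAbs E} {ρ : V → ℝ} (hB : IsOrthogonalFor A v.abs B)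
    (hu : IsOrthogonalFor v ρ u) (hρ : ∀ (x : E) w, ρ (x • w) = v.abs x * ρ w)
    (hρ0 : ∀ w, 0 ≤ ρ w) : IsOrthogonalFor A ρ (fun p : κ × ι => B p.1 • u p.2) := by
  intro c
  calc ρ (∑ p, c p • (B p.1 • u p.2)) = ⨆ ℓ, ⨆ k, v.abs (c (k, ℓ) • B k) * ρ (u ℓ) := by
        simp_rw [sum_smul_smul_eq_sum_sum_smul, hu _, hρ, hB _, Real.iSup_mul_of_nonneg (hρ0 _)]
    _ = ⨆ p, ρ (c p • (B p.1 • u p.2)) := by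
        rw [Finite.ciSup_comm, Finite.ciSup_prod]
        simp_rw [← smul_assoc, hρ]

end Tower

lemma prod_smul_tower {E : Type*} [Field E] {V : Type*} [AddCommGroup V] [Module E V]
    {κ ι : Type*} [Fintype κ] [Fintype ι] {w : E → ℝ} {ρ : V → ℝ}
    (hρ : ∀ (x : E) y, ρ (x • y) = w x * ρ y) (B : κ → E) (u : ι → V) :
    ∏ p : κ × ι, ρ (B p.1 • u p.2)
      = (∏ k, w (B k)) ^ Fintype.card ι * (∏ ℓ, ρ (u ℓ)) ^ Fintype.card κ := by
  simp_rw [hρ, Fintype.prod_prod_type, prod_mul_distrib, prod_const, prod_pow, card_univ]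

section Discrete

variable {q π : ℝ} {e : ℕ}

lemma zpow_mul_pow_pow (hq : q ≠ 0) (hπ : π ^ e = q⁻¹) (z : ℤ) (j : ℕ) :
    (q ^ z * π ^ j) ^ e = q ^ (z * e - j) := by
  rw [mul_pow, ← pow_mul, mul_comm j e, pow_mul, hπ, ← zpow_natCast (q ^ z), ← zpow_mul,
    inv_pow, ← zpow_natCast q j, ← zpow_neg, ← zpow_add₀ hq, sub_eq_add_neg]

lemma eq_of_zpow_mul_pow_eq (hq : 1 < q) (hπ : π ^ e = q⁻¹) {j j' : ℕ} (hj : j < e)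
    (hj' : j' < e) {z z' : ℤ} (h : q ^ z * π ^ j = q ^ z' * π ^ j') : j = j' := by
  have he := congrArg (· ^ e) h
  simp only [zpow_mul_pow_pow (by positivity) hπ] at he
  have hexp := zpow_right_injective₀ (by positivity) hq.ne' he
  have hdiff : ((j : ℤ) - j') = 0 :=
    Int.eq_zero_of_abs_lt_dvd (m := e) ⟨z - z', by linarith⟩ (abs_lt.mpr ⟨by omega, by omega⟩)
  omega

lemma abs_le_one_of_mul_pow_le_one {F : Type*} [Field F] {A : NAAbs F} (hq : 1 < q)
    (hdisc : ∀ a : F, a ≠ 0 → ∃ z : ℤ, A.abs a = q ^ z) (hπ0 : 0 ≤ π) (hπ : π ^ e = q⁻¹)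
    {j : ℕ} (hj : j < e) {a : F} (h : A.abs a * π ^ j ≤ 1) : A.abs a ≤ 1 := by
  rcases eq_or_ne a 0 with rfl | ha
  · simp
  obtain ⟨z, hz⟩ := hdisc a ha
  rw [hz] at h ⊢
  have hpow := pow_le_one₀ (mul_nonneg (by positivity) (pow_nonneg hπ0 j)) h (n := e)
  rw [zpow_mul_pow_pow (by positivity) hπ, zpow_le_one_iff_right₀ hq] at hpow
  have hz0 : z ≤ 0 := by nlinarith
  exact zpow_le_one_of_nonpos₀ hq.le hz0

lemma prod_pow_snd_sq (hπ : π ^ e = q⁻¹) (f : ℕ) :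
    (∏ k : Fin f × Fin e, π ^ (k.2 : ℕ)) ^ 2 = q⁻¹ ^ (f * (e - 1)) := by
  simp only [Fintype.prod_prod_type]
  rw [prod_const, card_univ, Fintype.card_fin, prod_pow_eq_pow_sum,
    Fin.sum_univ_eq_sum_range (fun j => j) e, ← pow_mul, ← pow_mul, mul_comm f, ← mul_assoc,
    sum_range_id_mul_two, mul_assoc, pow_mul, hπ, mul_comm]

lemma rpow_neg_one_div_pow (hq : 0 < q) (he : e ≠ 0) : (q ^ (-(1 : ℝ) / e)) ^ e = q⁻¹ := by
  rw [← Real.rpow_natCast, ← Real.rpow_mul hq.le, div_mul_cancel₀ _ (by positivity),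
    Real.rpow_neg_one]

lemma pow_eq_rpow_half_of_sq_eq {D x : ℝ} (hD : 0 ≤ D) (h : D ^ 2 = x) (r : ℕ) :
    D ^ r = x ^ ((r : ℝ) / 2) := by
  rw [← h, ← Real.rpow_natCast D 2, ← Real.rpow_mul hD, ← Real.rpow_natCast]
  congr 1
  ring

end Discrete

section ResidueUniformizer

variable {F E : Type*} [Field F] [Field E] [Algebra F E] {A : NAAbs F} {v : NAAbs E}

def intBasis (f e : ℕ) (ξ πE : E) (k : Fin f × Fin e) : E := ξ ^ (k.1 : ℕ) * πE ^ (k.2 : ℕ)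

lemma abs_intBasis {f e : ℕ} {ξ : E} (hξ : v.abs ξ = 1) (πE : E) (k : Fin f × Fin e) :
    v.abs (intBasis f e ξ πE k) = v.abs πE ^ (k.2 : ℕ) := by
  rw [intBasis, v.map_mul, v.abs_pow, v.abs_pow, hξ, one_pow, one_mul]

lemma NAAbs.abs_algebra_smul (hext : ∀ a : F, v.abs (algebraMap F E a) = A.abs a) (a : F)
    (x : E) : v.abs (a • x) = A.abs a * v.abs x := by
  rw [Algebra.smul_def, v.map_mul, hext]

lemma abs_sum_smul_pow_eq_iSup (hext : ∀ a : F, v.abs (algebraMap F E a) = A.abs a)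
    {f : ℕ} {ξ : E} (hres : ∀ c : Fin f → F, (∀ i, A.abs (c i) ≤ 1) → (∃ i, A.abs (c i) = 1) →
      v.abs (∑ i, algebraMap F E (c i) * ξ ^ (i : ℕ)) = 1) (c : Fin f → F) :
    v.abs (∑ i, c i • ξ ^ (i : ℕ)) = ⨆ i, A.abs (c i) := by
  rcases eq_or_ne c 0 with rfl | hc
  · simp [Real.iSup_const_zero]
  obtain ⟨i, hi⟩ := Function.ne_iff.mp hc
  have : Nonempty (Fin f) := ⟨i⟩
  obtain ⟨i₀, hi₀⟩ := exists_eq_ciSup_of_finite (f := fun i => A.abs (c i))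
  have hle : ∀ i, A.abs (c i) ≤ A.abs (c i₀) :=
    fun i => (Finite.le_ciSup (fun i => A.abs (c i)) i).trans_eq hi₀.symm
  have hc₀ : A.abs (c i₀) ≠ 0 :=
    fun h => hi ((A.eq_zero _).mp (le_antisymm (h ▸ hle i) (A.nonneg _)))
  have hsum : ∑ i, c i • ξ ^ (i : ℕ)
      = algebraMap F E (c i₀) * ∑ i, algebraMap F E (c i / c i₀) * ξ ^ (i : ℕ) := by
    rw [Finset.mul_sum]
    refine sum_congr rfl fun i _ => ?_
    rw [Algebra.smul_def, ← mul_assoc, ← map_mul, mul_div_cancel₀ _ ((A.eq_zero _).not.mp hc₀)]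
  rw [← hi₀, hsum, v.map_mul, hext, hres, mul_one]
  · intro i
    rw [div_eq_mul_inv, A.map_mul, A.abs_inv]
    exact mul_inv_le_one_of_le₀ (hle i) (A.nonneg _)
  · exact ⟨i₀, by rw [div_self ((A.eq_zero _).not.mp hc₀), A.abs_one]⟩

lemma exists_zpow_of_abs_sum_smul_pow (hext : ∀ a : F, v.abs (algebraMap F E a) = A.abs a)
    {f : ℕ} {ξ : E} (hres : ∀ c : Fin f → F, (∀ i, A.abs (c i) ≤ 1) → (∃ i, A.abs (c i) = 1) →
      v.abs (∑ i, algebraMap F E (c i) * ξ ^ (i : ℕ)) = 1) {q : ℝ}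
    (hdisc : ∀ a : F, a ≠ 0 → ∃ z : ℤ, A.abs a = q ^ z) (c : Fin f → F)
    (hc : v.abs (∑ i, c i • ξ ^ (i : ℕ)) ≠ 0) :
    ∃ z : ℤ, v.abs (∑ i, c i • ξ ^ (i : ℕ)) = q ^ z := by
  rw [abs_sum_smul_pow_eq_iSup hext hres] at hc ⊢
  rcases isEmpty_or_nonempty (Fin f) with _ | _
  · simp [Real.iSup_of_isEmpty] at hc
  obtain ⟨i, hi⟩ := exists_eq_ciSup_of_finite (f := fun i => A.abs (c i))
  rw [← hi] at hc ⊢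
  exact hdisc _ ((A.eq_zero _).not.mp hc)

theorem isOrthogonalFor_intBasis (hext : ∀ a : F, v.abs (algebraMap F E a) = A.abs a)
    {f e : ℕ} {ξ πE : E} (hξ : v.abs ξ = 1)
    (hres : ∀ c : Fin f → F, (∀ i, A.abs (c i) ≤ 1) → (∃ i, A.abs (c i) = 1) →
      v.abs (∑ i, algebraMap F E (c i) * ξ ^ (i : ℕ)) = 1) {q : ℝ} (hq : 1 < q)
    (hdisc : ∀ a : F, a ≠ 0 → ∃ z : ℤ, A.abs a = q ^ z) (hπE : v.abs πE ^ e = q⁻¹) :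
    IsOrthogonalFor A v.abs (intBasis f e ξ πE) := by
  intro c
  set y : Fin e → E := fun j => ∑ i, c (i, j) • ξ ^ (i : ℕ)
  have hsum : ∑ k, c k • intBasis f e ξ πE k = ∑ j, y j * πE ^ (j : ℕ) := by
    simp_rw [y, intBasis, Finset.sum_mul, Fintype.sum_prod_type, smul_mul_assoc]
    exact Finset.sum_comm
  have hterm : ∀ k, v.abs (c k • intBasis f e ξ πE k) = A.abs (c k) * v.abs πE ^ (k.2 : ℕ) := by
    intro k
    rw [NAAbs.abs_algebra_smul hext, abs_intBasis hξ]
  have hdistinct : ∀ j j', v.abs (y j * πE ^ (j : ℕ)) = v.abs (y j' * πE ^ (j' : ℕ)) →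
      v.abs (y j * πE ^ (j : ℕ)) ≠ 0 → j = j' := by
    intro j j' h h0
    simp only [v.map_mul, v.abs_pow] at h h0
    obtain ⟨z, hz⟩ := exists_zpow_of_abs_sum_smul_pow hext hres hdisc _ (left_ne_zero_of_mul h0)
    obtain ⟨z', hz'⟩ := exists_zpow_of_abs_sum_smul_pow hext hres hdisc _
      (left_ne_zero_of_mul (h ▸ h0))
    rw [hz, hz'] at h
    exact Fin.ext (eq_of_zpow_mul_pow_eq hq hπE j.isLt j'.isLt h)
  rw [hsum, v.abs_sum_eq_iSup _ hdistinct]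
  simp_rw [hterm, v.map_mul, v.abs_pow, y, abs_sum_smul_pow_eq_iSup hext hres,
    Real.iSup_mul_of_nonneg (pow_nonneg (v.nonneg πE) _)]
  rw [Finite.ciSup_comm, Finite.ciSup_prod]

theorem isLatticeBasis_intBasis (hext : ∀ a : F, v.abs (algebraMap F E a) = A.abs a)
    {f e : ℕ} (hf : 0 < f) (he : 0 < e) (hdeg : Module.finrank F E = e * f) {ξ πE : E}
    (hξ : v.abs ξ = 1)
    (hres : ∀ c : Fin f → F, (∀ i, A.abs (c i) ≤ 1) → (∃ i, A.abs (c i) = 1) →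
      v.abs (∑ i, algebraMap F E (c i) * ξ ^ (i : ℕ)) = 1) {q : ℝ} (hq : 1 < q)
    (hdisc : ∀ a : F, a ≠ 0 → ∃ z : ℤ, A.abs a = q ^ z) (hπE : v.abs πE ^ e = q⁻¹) :
    IsLatticeBasis A (intBasis f e ξ πE) {x | v.abs x ≤ 1} := by
  have : Nonempty (Fin f × Fin e) := ⟨(⟨0, hf⟩, ⟨0, he⟩)⟩
  have hob := isOrthogonalFor_intBasis hext hξ hres hq hdisc hπE
  have hπ0 : v.abs πE ≠ 0 := fun h => by
    rw [h, zero_pow he.ne'] at hπE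
    exact (inv_pos.mpr (zero_lt_one.trans hq)).ne hπE
  have hπ1 : v.abs πE ≤ 1 :=
    (pow_le_one_iff_of_nonneg (v.nonneg _) he.ne').mp (hπE ▸ inv_le_one_of_one_le₀ hq.le)
  have hli := hob.linearIndependent v.nonneg v.abs_zero (NAAbs.abs_algebra_smul hext)
    fun k => by simpa only [abs_intBasis hξ] using pow_ne_zero _ hπ0
  let B := basisOfLinearIndependentOfCardEqFinrank hli (by simp [hdeg, mul_comm])
  have hB : ⇑B = intBasis f e ξ πE := coe_basisOfLinearIndependentOfCardEqFinrank hli _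
  rw [← hB] at hob ⊢
  refine B.isLatticeBasis_of_isOrthogonalFor hob fun k a => ?_
  rw [hB, NAAbs.abs_algebra_smul hext, abs_intBasis hξ]
  exact ⟨abs_le_one_of_mul_pow_le_one hq hdisc (v.nonneg _) hπE k.2.isLt,
    fun h => mul_le_one₀ h (pow_nonneg (v.nonneg _) _) (pow_le_one₀ (v.nonneg _) hπ1)⟩

end ResidueUniformizer

section Restriction

variable {F E : Type*} [Field F] [Field E] [Algebra F E] {f e r : ℕ}

variable (F) in
/-- The identification `F^{nr} ≅ E^r` through the basis `ξ^i π_E^j`; `res(ν_E)` is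
`(ν_E ∘ resMap)^{1/n}`. -/
def resMap (f e r : ℕ) (ξ πE : E) : ((Fin f × Fin e × Fin r) → F) →ₗ[F] (Fin r → E) where
  toFun x ℓ := ∑ i : Fin f, ∑ j : Fin e, algebraMap F E (x (i, j, ℓ)) * ξ ^ (i : ℕ) * πE ^ (j : ℕ)
  map_add' x y := by
    ext ℓ
    simp [add_mul, sum_add_distrib]
  map_smul' a x := by
    ext ℓ
    simp [Finset.mul_sum, Algebra.smul_def, mul_assoc]

lemma resMap_apply (ξ πE : E) (x : (Fin f × Fin e × Fin r) → F) (ℓ : Fin r) :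
    resMap F f e r ξ πE x ℓ = ∑ k, x (k.1, k.2, ℓ) • intBasis f e ξ πE k := by
  simp [resMap, intBasis, Fintype.sum_prod_type, Algebra.smul_def, mul_assoc]

lemma resMap_injective {ξ πE : E} (hB : LinearIndependent F (intBasis f e ξ πE)) :
    Function.Injective (resMap F f e r ξ πE) := by
  refine (injective_iff_map_eq_zero _).mpr fun x hx => funext fun ⟨i, j, ℓ⟩ => ?_
  have h := congrFun hx ℓ
  rw [resMap_apply] at h
  exact Fintype.linearIndependent_iff.mp hB (fun k => x (k.1, k.2, ℓ)) h (i, j)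

lemma resMap_image {A : NAAbs F} {v : NAAbs E} {ξ πE : E}
    (hB : IsLatticeBasis A (intBasis f e ξ πE) {x | v.abs x ≤ 1}) :
    resMap F f e r ξ πE '' {x : (Fin f × Fin e × Fin r) → F | ∀ p, A.abs (x p) ≤ 1}
      = {y | ∀ ℓ, v.abs (y ℓ) ≤ 1} := by
  ext y
  constructor
  · rintro ⟨x, hx, rfl⟩ ℓ
    rw [resMap_apply]
    exact (hB.sum_smul_mem_iff _).mpr fun k => hx _
  · intro hy
    choose c hc hcy using fun ℓ => (hB.2 (y ℓ)).mp (hy ℓ)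
    exact ⟨fun p => c p.2.2 (p.1, p.2.1), fun p => hc _ _,
      funext fun ℓ => by rw [resMap_apply, hcy ℓ]⟩

end Restriction

lemma prod_rpow_inv_intBasis_smul {E : Type*} [Field E] {v AE : NAAbs E} {e f : ℕ}
    (hAE : ∀ x, AE.abs x = v.abs x ^ (e * f)) (hn : e * f ≠ 0) {ξ πE : E} (hξ : v.abs ξ = 1)
    {q : ℝ} (hq : 0 < q) (hπE : v.abs πE ^ e = q⁻¹) {V : Type*} [AddCommGroup V] [Module E V]
    (ν : NANorm AE V) {r : ℕ} (u : Fin r → V) :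
    ∏ p : (Fin f × Fin e) × Fin r, ν.nu (intBasis f e ξ πE p.1 • u p.2) ^ ((e * f : ℕ) : ℝ)⁻¹
      = (q ^ (-((f * (e - 1) : ℕ) : ℝ))) ^ ((r : ℝ) / 2) * ∏ ℓ, ν.nu (u ℓ) := by
  rw [prod_smul_tower (ρ := fun y => ν.nu y ^ ((e * f : ℕ) : ℝ)⁻¹)
      (ν.rpow_inv_smul hn v.nonneg hAE), Fintype.card_fin, Fintype.card_prod,
    Fintype.card_fin, Fintype.card_fin, mul_comm f e]
  have hu : (∏ ℓ, ν.nu (u ℓ) ^ ((e * f : ℕ) : ℝ)⁻¹) ^ (e * f) = ∏ ℓ, ν.nu (u ℓ) := by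
    simp_rw [← prod_pow, Real.rpow_inv_natCast_pow (ν.nonneg _) hn]
  simp_rw [hu, abs_intBasis hξ]
  rw [Real.rpow_neg hq.le, Real.rpow_natCast, ← inv_pow,
    ← pow_eq_rpow_half_of_sq_eq (prod_nonneg fun k _ => pow_nonneg (v.nonneg _) _)
      (prod_pow_snd_sq hπE f)]

theorem statement8_general {F E : Type*} [Field F] [Field E] [Algebra F E]
    (A : NAAbs F)
    (q : ℝ) (hq : 1 < q)
    (hdisc : ∀ a : F, a ≠ 0 → ∃ z : ℤ, A.abs a = q ^ z)
    (absE : E → ℝ)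
    (hE0 : ∀ x, 0 ≤ absE x) (hEz : ∀ x, absE x = 0 ↔ x = 0)
    (hEmul : ∀ x y, absE (x * y) = absE x * absE y)
    (hEultra : ∀ x y, absE (x + y) ≤ max (absE x) (absE y))
    (hext : ∀ a : F, absE (algebraMap F E a) = A.abs a)
    (e f : ℕ) (he : 0 < e) (hf : 0 < f)
    (hdeg : Module.finrank F E = e * f)
    (πE : E) (hπE : absE πE = q ^ (-(1 : ℝ) / (e : ℝ)))
    (ξ : E) (hξ : absE ξ = 1)
    (hres : ∀ c : Fin f → F, (∀ i, A.abs (c i) ≤ 1) → (∃ i, A.abs (c i) = 1) →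
      absE (∑ i, algebraMap F E (c i) * ξ ^ (i : ℕ)) = 1)
    -- the *normalized* absolute value of `E` is `|·|_E = |·|_F^n`
    (AE : NAAbs E) (hAE : ∀ x, AE.abs x = absE x ^ (e * f))
    (r : ℕ) (hr : 0 < r)
    (νE : NANorm AE (Fin r → E))
    (uE : Fin r → (Fin r → E))
    (huE : IsLatticeBasis AE uE {v : Fin r → E | ∀ ℓ, absE (v ℓ) ≤ 1})
    (huEo : IsOrthogonalFor AE νE.nu uE)
    (wF : Fin (e * f * r) → ((Fin f × Fin e × Fin r) → F))
    (hwF : IsLatticeBasis A wF {x : (Fin f × Fin e × Fin r) → F | ∀ p, A.abs (x p) ≤ 1})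
    (hwFo : IsOrthogonalFor A
      (fun x : (Fin f × Fin e × Fin r) → F =>
        (νE.nu (fun ℓ => ∑ i, ∑ j, algebraMap F E (x (i, j, ℓ)) * ξ ^ (i : ℕ) * πE ^ (j : ℕ)))
          ^ (((e * f : ℕ) : ℝ))⁻¹) wF) :
    ∏ p, (νE.nu (fun ℓ => ∑ i, ∑ j,
          algebraMap F E (wF p (i, j, ℓ)) * ξ ^ (i : ℕ) * πE ^ (j : ℕ)))
        ^ (((e * f : ℕ) : ℝ))⁻¹
      = (q ^ (-((f * (e - 1) : ℕ) : ℝ))) ^ ((r : ℝ) / 2) * ∏ ℓ, νE.nu (uE ℓ) := by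
  have : Nonempty (Fin r) := ⟨⟨0, hr⟩⟩
  let v : NAAbs E := ⟨absE, hE0, hEz, hEmul, hEultra⟩
  have hq0 : 0 < q := zero_lt_one.trans hq
  have hn : e * f ≠ 0 := by positivity
  have hπ : absE πE ^ e = q⁻¹ := hπE ▸ rpow_neg_one_div_pow hq0 he.ne'
  have hBL : IsLatticeBasis A (intBasis f e ξ πE) {x | v.abs x ≤ 1} :=
    isLatticeBasis_intBasis hext hf he hdeg hξ hres hq hdisc hπ
  set ρ : (Fin r → E) → ℝ := fun y => νE.nu y ^ ((e * f : ℕ) : ℝ)⁻¹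
  have hρ : ∀ (x : E) y, ρ (x • y) = absE x * ρ y := νE.rpow_inv_smul hn hE0 hAE
  have hρF : ∀ (a : F) y, ρ (a • y) = A.abs a * ρ y := fun a y => by
    rw [← algebraMap_smul E a y, hρ, hext]
  have hρ0 : ∀ y, 0 ≤ ρ y := fun y => Real.rpow_nonneg (νE.nonneg y) _
  have hwFL : IsLatticeBasis A (resMap F f e r ξ πE ∘ wF) {y | ∀ ℓ, absE (y ℓ) ≤ 1} :=
    resMap_image hBL ▸ hwF.map _ (resMap_injective hBL.1)
  have hwFo' : IsOrthogonalFor A ρ (resMap F f e r ξ πE ∘ wF) := IsOrthogonalFor.map _ hwFo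
  have hBL' : IsLatticeBasis A (intBasis f e ξ πE) {x | AE.abs x ≤ 1} := by
    simpa only [hAE, pow_le_one_iff_of_nonneg (hE0 _) hn] using hBL
  -- `IsOrthogonalFor` does not depend on its absolute-value argument.
  have huρ : IsOrthogonalFor v ρ uE := huEo.rpow νE.nonneg (by positivity)
  have hBuo := (isOrthogonalFor_intBasis hext hξ hres hq hdisc hπ).smul_tower huρ hρ hρ0
  let σ : (Fin f × Fin e) × Fin r ≃ Fin (e * f * r) :=
    Fintype.equivOfCardEq (by simp [mul_comm])
  calc ∏ p, ρ (resMap F f e r ξ πE (wF p))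
      = ∏ p, ρ ((resMap F f e r ξ πE ∘ wF ∘ σ) p) := (σ.prod_comp _).symm
    _ = ∏ p : (Fin f × Fin e) × Fin r, ρ (intBasis f e ξ πE p.1 • uE p.2) :=
        (hwFL.comp_equiv σ).prod_eq_of_isOrthogonalFor (hBL'.smul_tower huE)
          (hwFo'.comp_equiv σ) hBuo hρ0 hρF
    _ = _ := prod_rpow_inv_intBasis_smul (v := v) hAE hn hξ hq0 hπ νE uE

/-- The lattice discriminant of the restriction of scalars
`res(ν_E)` (a norm on `F^{nr}` defined via the orthogonal basis `ξ^i π_E^j` of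
`O_E` over `O_F` and the `n`-th root) satisfies
`D(res(ν_E)) = 𝔡(E/F)^{r/2} · D(ν_E)`, where `𝔡(E/F) = |π_F|^{f(e-1)} = q^{-f(e-1)}`. -/
theorem statement8 {F E : Type*} [Field F] [Field E] [Algebra F E]
    (A : NAAbs F) (πF : F) (hloc : A.IsLocal πF)
    (q : ℝ) (hq : 1 < q) (hπF : A.abs πF = q⁻¹)
    (hdisc : ∀ a : F, a ≠ 0 → ∃ z : ℤ, A.abs a = q ^ z)
    (absE : E → ℝ)
    (hE0 : ∀ x, 0 ≤ absE x) (hEz : ∀ x, absE x = 0 ↔ x = 0)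
    (hEmul : ∀ x y, absE (x * y) = absE x * absE y)
    (hEultra : ∀ x y, absE (x + y) ≤ max (absE x) (absE y))
    (hext : ∀ a : F, absE (algebraMap F E a) = A.abs a)
    (e f : ℕ) (he : 0 < e) (hf : 0 < f)
    (hdeg : Module.finrank F E = e * f)
    (πE : E) (hπE : absE πE = q ^ (-(1 : ℝ) / (e : ℝ)))
    (ξ : E) (hξ : absE ξ = 1)
    (hres : ∀ c : Fin f → F, (∀ i, A.abs (c i) ≤ 1) → (∃ i, A.abs (c i) = 1) →
      absE (∑ i, algebraMap F E (c i) * ξ ^ (i : ℕ)) = 1)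
    -- the *normalized* absolute value of `E` is `|·|_E = |·|_F^n`
    (AE : NAAbs E) (hAE : ∀ x, AE.abs x = absE x ^ (e * f))
    (r : ℕ) (hr : 0 < r)
    (νE : NANorm AE (Fin r → E))
    (uE : Fin r → (Fin r → E))
    (huE : IsLatticeBasis AE uE {v : Fin r → E | ∀ ℓ, absE (v ℓ) ≤ 1})
    (huEo : IsOrthogonalFor AE νE.nu uE)
    (wF : Fin (e * f * r) → ((Fin f × Fin e × Fin r) → F))
    (hwF : IsLatticeBasis A wF {x : (Fin f × Fin e × Fin r) → F | ∀ p, A.abs (x p) ≤ 1})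
    (hwFo : IsOrthogonalFor A
      (fun x : (Fin f × Fin e × Fin r) → F =>
        (νE.nu (fun ℓ => ∑ i, ∑ j, algebraMap F E (x (i, j, ℓ)) * ξ ^ (i : ℕ) * πE ^ (j : ℕ)))
          ^ (((e * f : ℕ) : ℝ))⁻¹) wF) :
    ∏ p, (νE.nu (fun ℓ => ∑ i, ∑ j,
          algebraMap F E (wF p (i, j, ℓ)) * ξ ^ (i : ℕ) * πE ^ (j : ℕ)))
        ^ (((e * f : ℕ) : ℝ))⁻¹
      = (q ^ (-((f * (e - 1) : ℕ) : ℝ))) ^ ((r : ℝ) / 2) * ∏ ℓ, νE.nu (uE ℓ) :=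
  statement8_general A q hq hdisc absE hE0 hEz hEmul hEultra hext e f he hf hdeg πE hπE ξ hξ hres AE
    hAE r hr νE uE huE huEo wF hwF hwFo
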